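/- arXiv:0909.1969 — 4 statements merged into one kernel-verified Lean document; each statement's English description precedes it below -/
import Mathlib

section
/- Let B be a real symmetric 3×3 matrix of the form B = [[a,d,e],[d,b,f],[e,f,c]], and let B₂ = diag(0,0,1). If the discriminant of the characteristic polynomial of B + t·B₂ vanishes for all real t, then a = b, d = 0, e = 0, and f = 0; that is, B = diag(a,a,c). -/
/-- The discriminant of a monic cubic polynomial `λ³ + p λ² + q λ + r`,
expressed through its coefficients. -/
noncomputable def cubicDiscrim (P : Polynomial ℝ) : ℝ :=
  let p := P.coeff 2
  let q := P.coeff 1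
  let r := P.coeff 0
  18 * p * q * r - 4 * p ^ 3 * r + p ^ 2 * q ^ 2 - 4 * q ^ 3 - 27 * r ^ 2

/-! For fixed `B`, the discriminant `D t` of `B + t • diag(0,0,1)` is a quartic polynomial in `t` whose
leading coefficient `(a - b)² + 4 d²` is the discriminant of the upper-left `2 × 2` block; so
`D ≡ 0` forces `a = b` and `d = 0`. Then `a` is an eigenvalue with eigenvector `(f, -e, 0)`, and
`D 0 = (e² + f²)² ((c - a)² + 4 (e² + f²))` forces `e = f = 0`. -/

open Polynomial Matrix

theorem Matrix.charpoly_fin_three {R : Type*} [CommRing R] (M : Matrix (Fin 3) (Fin 3) R) :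
    M.charpoly = X ^ 3 - C M.trace * X ^ 2
      + C (M 0 0 * M 1 1 - M 0 1 * M 1 0 + M 0 0 * M 2 2 - M 0 2 * M 2 0
        + M 1 1 * M 2 2 - M 1 2 * M 2 1) * X - C M.det := by
  rw [charpoly, det_fin_three, trace_fin_three, det_fin_three]
  simp only [charmatrix_apply, Fin.isValue, Fin.reduceEq, ne_eq,
    not_false_eq_true, diagonal_apply_eq, diagonal_apply_ne, map_add, map_sub, map_mul]
  ring

theorem cubicDiscrim_X_pow_three_sub (p q r : ℝ) :
    cubicDiscrim (X ^ 3 - C p * X ^ 2 + C q * X - C r) =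
      18 * p * q * r - 4 * p ^ 3 * r + p ^ 2 * q ^ 2 - 4 * q ^ 3 - 27 * r ^ 2 := by
  simp only [cubicDiscrim, coeff_add, coeff_sub, coeff_X_pow, coeff_C_mul_X_pow, coeff_C_mul_X,
    coeff_C]
  norm_num
  ring

theorem charpoly_symm_fin_three (a b c d e f : ℝ) :
    !![a, d, e; d, b, f; e, f, c].charpoly = X ^ 3 - C (a + b + c) * X ^ 2
      + C (a * b + a * c + b * c - d ^ 2 - e ^ 2 - f ^ 2) * X
      - C (a * b * c + 2 * d * e * f - a * f ^ 2 - b * e ^ 2 - c * d ^ 2) := by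
  rw [charpoly_fin_three, trace_fin_three, det_fin_three]
  simp only [Fin.isValue, of_apply, cons_val', cons_val_zero, cons_val_fin_one, cons_val_one,
    cons_val, map_add, map_sub, map_mul, map_pow, C_ofNat]
  ring

/-- The fourth finite difference of a quartic is `24` times its leading coefficient. -/
theorem cubicDiscrim_charpoly_symm_fourth_difference (a b c d e f : ℝ) :
    let D : ℝ → ℝ := fun t ↦ cubicDiscrim !![a, d, e; d, b, f; e, f, c + t].charpoly
    D 2 - 4 * D 1 + 6 * D 0 - 4 * D (-1) + D (-2) = 24 * ((a - b) ^ 2 + 4 * d ^ 2) := by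
  simp only [charpoly_symm_fin_three, cubicDiscrim_X_pow_three_sub]
  ring

theorem cubicDiscrim_charpoly_symm_of_scalar_block (a c e f : ℝ) :
    cubicDiscrim !![a, 0, e; 0, a, f; e, f, c].charpoly =
      (e ^ 2 + f ^ 2) ^ 2 * ((c - a) ^ 2 + 4 * (e ^ 2 + f ^ 2)) := by
  rw [charpoly_symm_fin_three, cubicDiscrim_X_pow_three_sub]
  ring

theorem symm_add_smul_diagonal_zero_zero_one (a b c d e f t : ℝ) :
    !![a, d, e; d, b, f; e, f, c] + t • diagonal ![0, 0, 1] = !![a, d, e; d, b, f; e, f, c + t] := by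
  ext i j
  fin_cases i <;> fin_cases j <;> simp

theorem vanishing_discriminant_forces_diagonal
    (a b c d e f : ℝ)
    (B : Matrix (Fin 3) (Fin 3) ℝ)
    (hB : B = !![a, d, e; d, b, f; e, f, c])
    (B₂ : Matrix (Fin 3) (Fin 3) ℝ)
    (hB₂ : B₂ = Matrix.diagonal ![0, 0, 1])
    (hdisc : ∀ t : ℝ, cubicDiscrim (B + t • B₂).charpoly = 0) :
    a = b ∧ d = 0 ∧ e = 0 ∧ f = 0 := by
  subst hB hB₂
  simp only [symm_add_smul_diagonal_zero_zero_one] at hdisc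
  have hblock : (a - b) ^ 2 + 4 * d ^ 2 = 0 := by
    have h := cubicDiscrim_charpoly_symm_fourth_difference a b c d e f
    simp only [hdisc] at h
    linarith
  obtain ⟨hab, rfl⟩ : a = b ∧ d = 0 := by
    constructor <;> nlinarith [sq_nonneg (a - b), sq_nonneg d]
  subst hab
  have hoff := hdisc 0
  rw [add_zero, cubicDiscrim_charpoly_symm_of_scalar_block] at hoff
  have hef : e ^ 2 + f ^ 2 = 0 := by
    rcases mul_eq_zero.mp hoff with h | h
    · exact pow_eq_zero_iff two_ne_zero |>.mp h
    · nlinarith [sq_nonneg (c - a), sq_nonneg e, sq_nonneg f]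
  exact ⟨rfl, rfl, by nlinarith [sq_nonneg e, sq_nonneg f], by nlinarith [sq_nonneg e, sq_nonneg f]⟩
end

section
/- Let b₁, b₂, b₃ be pairwise distinct real numbers. Suppose f₁, f₂, f₃ : ℝ³ → ℝ are smooth functions such that fⱼ is independent of xⱼ for j = 1,2,3, and (b₃−b₂) f₁ + (b₁−b₃) f₂ + (b₂−b₁) f₃ is a polynomial of degree at most 2 on ℝ³. Then there exist smooth functions m, n, r of one variable and quadratic polynomials qⱼ such that f₁ = (m(x₃)−n(x₂))/(b₃−b₂) + q₁, f₂ = (r(x₁)−m(x₃))/(b₁−b₃) + q₂, f₃ = (n(x₂)−r(x₁))/(b₂−b₁) + q₃. -/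
/-- A polynomial function of total degree at most 2 on `ℝ³`. -/
def IsQuadraticPoly (q : (Fin 3 → ℝ) → ℝ) : Prop :=
  ∃ (c : ℝ) (b : Fin 3 → ℝ) (Q : Matrix (Fin 3) (Fin 3) ℝ),
    ∀ x, q x = c + (∑ i, b i * x i) + ∑ i, ∑ j, Q i j * x i * x j

theorem decomposition_of_cyclic_relation_up_to_quadratic
    (b₁ b₂ b₃ : ℝ) (h12 : b₁ ≠ b₂) (h23 : b₂ ≠ b₃) (h13 : b₁ ≠ b₃)
    (f₁ f₂ f₃ : (Fin 3 → ℝ) → ℝ)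
    (hs₁ : ContDiff ℝ (⊤ : ℕ∞) f₁) (hs₂ : ContDiff ℝ (⊤ : ℕ∞) f₂) (hs₃ : ContDiff ℝ (⊤ : ℕ∞) f₃)
    (hi₁ : ∀ x y : Fin 3 → ℝ, (∀ i, i ≠ 0 → x i = y i) → f₁ x = f₁ y)
    (hi₂ : ∀ x y : Fin 3 → ℝ, (∀ i, i ≠ 1 → x i = y i) → f₂ x = f₂ y)
    (hi₃ : ∀ x y : Fin 3 → ℝ, (∀ i, i ≠ 2 → x i = y i) → f₃ x = f₃ y)
    (hrel : IsQuadraticPoly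
      (fun x => (b₃ - b₂) * f₁ x + (b₁ - b₃) * f₂ x + (b₂ - b₁) * f₃ x)) :
    ∃ (m n r : ℝ → ℝ) (q₁ q₂ q₃ : (Fin 3 → ℝ) → ℝ),
      ContDiff ℝ (⊤ : ℕ∞) m ∧ ContDiff ℝ (⊤ : ℕ∞) n ∧ ContDiff ℝ (⊤ : ℕ∞) r ∧
      IsQuadraticPoly q₁ ∧ IsQuadraticPoly q₂ ∧ IsQuadraticPoly q₃ ∧
      (∀ x, f₁ x = (m (x 2) - n (x 1)) / (b₃ - b₂) + q₁ x) ∧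
      (∀ x, f₂ x = (r (x 0) - m (x 2)) / (b₁ - b₃) + q₂ x) ∧
      (∀ x, f₃ x = (n (x 1) - r (x 0)) / (b₂ - b₁) + q₃ x) := by
  obtain ⟨c, bb, Q, hE⟩ := hrel
  have hb32 : b₃ - b₂ ≠ 0 := sub_ne_zero.mpr (Ne.symm h23)
  have hb13 : b₁ - b₃ ≠ 0 := sub_ne_zero.mpr h13
  have hb21 : b₂ - b₁ ≠ 0 := sub_ne_zero.mpr (Ne.symm h12)
  -- the relation, evaluated at an arbitrary point, using independence
  have key : ∀ a b d : ℝ, (b₃ - b₂) * f₁ ![0, b, d] + (b₁ - b₃) * f₂ ![a, 0, d]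
        + (b₂ - b₁) * f₃ ![a, b, 0]
      = c + (bb 0 * a + bb 1 * b + bb 2 * d)
        + (Q 0 0 * a * a + Q 0 1 * a * b + Q 0 2 * a * d
         + Q 1 0 * b * a + Q 1 1 * b * b + Q 1 2 * b * d
         + Q 2 0 * d * a + Q 2 1 * d * b + Q 2 2 * d * d) := by
    intro a b d
    have h := hE ![a, b, d]
    dsimp only at h
    rw [hi₁ ![a, b, d] ![0, b, d] (by intro i hi; fin_cases i <;> first | rfl | simp at hi),
        hi₂ ![a, b, d] ![a, 0, d] (by intro i hi; fin_cases i <;> first | rfl | simp at hi),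
        hi₃ ![a, b, d] ![a, b, 0] (by intro i hi; fin_cases i <;> first | rfl | simp at hi)] at h
    simp only [Fin.sum_univ_three, Matrix.cons_val_zero, Matrix.cons_val_one,
      Matrix.head_cons, Matrix.cons_val_two, Matrix.tail_cons] at h
    linear_combination h
  -- rewriting each fⱼ through its independence
  have hf₁ : ∀ x : Fin 3 → ℝ, f₁ x = f₁ ![0, x 1, x 2] := fun x =>
    hi₁ x _ (by intro i hi; fin_cases i <;> first | rfl | simp at hi)
  have hf₂ : ∀ x : Fin 3 → ℝ, f₂ x = f₂ ![x 0, 0, x 2] := fun x =>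
    hi₂ x _ (by intro i hi; fin_cases i <;> first | rfl | simp at hi)
  have hf₃ : ∀ x : Fin 3 → ℝ, f₃ x = f₃ ![x 0, x 1, 0] := fun x =>
    hi₃ x _ (by intro i hi; fin_cases i <;> first | rfl | simp at hi)
  -- smooth curves
  have hc1 : ContDiff ℝ (⊤ : ℕ∞) (fun t : ℝ => (![0, 0, t] : Fin 3 → ℝ)) := by
    apply contDiff_pi.mpr; intro i
    fin_cases i <;> simp <;> first | exact contDiff_const | exact contDiff_id
  have hc2 : ContDiff ℝ (⊤ : ℕ∞) (fun t : ℝ => (![0, t, 0] : Fin 3 → ℝ)) := by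
    apply contDiff_pi.mpr; intro i
    fin_cases i <;> simp <;> first | exact contDiff_const | exact contDiff_id
  have hc3 : ContDiff ℝ (⊤ : ℕ∞) (fun t : ℝ => (![t, 0, 0] : Fin 3 → ℝ)) := by
    apply contDiff_pi.mpr; intro i
    fin_cases i <;> simp <;> first | exact contDiff_const | exact contDiff_id
  refine ⟨fun t => (b₃ - b₂) * f₁ ![0, 0, t],
         fun t => -((b₃ - b₂) * f₁ ![0, t, 0]),
         fun t => (b₁ - b₃) * f₂ ![t, 0, 0],
         fun x => f₁ x - ((b₃ - b₂) * f₁ ![0, 0, x 2] - -((b₃ - b₂) * f₁ ![0, x 1, 0])) / (b₃ - b₂),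
         fun x => f₂ x - ((b₁ - b₃) * f₂ ![x 0, 0, 0] - (b₃ - b₂) * f₁ ![0, 0, x 2]) / (b₁ - b₃),
         fun x => f₃ x - (-((b₃ - b₂) * f₁ ![0, x 1, 0]) - (b₁ - b₃) * f₂ ![x 0, 0, 0]) / (b₂ - b₁),
         contDiff_const.mul (hs₁.comp hc1),
         (contDiff_const.mul (hs₁.comp hc2)).neg,
         contDiff_const.mul (hs₂.comp hc3),
         ?_, ?_, ?_, fun x => by ring, fun x => by ring, fun x => by ring⟩
  · -- q₁ quadratic
    refine ⟨-f₁ ![0, 0, 0], 0,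
      Matrix.of fun i j => if i = 1 ∧ j = 2 then (Q 1 2 + Q 2 1)/(b₃ - b₂) else 0, fun x => ?_⟩
    dsimp only
    rw [hf₁ x]
    simp only [Fin.sum_univ_three, Matrix.cons_val_zero, Matrix.cons_val_one,
      Matrix.head_cons, Matrix.cons_val_two, Matrix.tail_cons, Pi.zero_apply,
      Matrix.cons_val', Matrix.head_fin_const, Matrix.empty_val', Matrix.cons_val_fin_one,
      Matrix.vecHead, Matrix.vecTail, Function.comp,
      show Matrix.vecHead (Matrix.vecTail fun _ : Fin 3 => (0:ℝ)) = 0 from rfl]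
    field_simp
    try simp
    linear_combination (norm := (field_simp; ring)) (key 0 (x 1) (x 2) - key 0 0 (x 2) - key 0 (x 1) 0 + key 0 0 0) / (b₃ - b₂)
  · -- q₂ quadratic
    refine ⟨(b₃ - b₂) * f₁ ![0, 0, 0] / (b₁ - b₃),
      (fun j => if j = 2 then bb 2 / (b₁ - b₃) else 0),
      Matrix.of (fun i j => if i = 0 ∧ j = 2 then (Q 0 2 + Q 2 0)/(b₁ - b₃)
        else if i = 2 ∧ j = 2 then Q 2 2/(b₁ - b₃) else 0), fun x => ?_⟩
    dsimp only
    rw [hf₂ x]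
    simp [Fin.sum_univ_three]
    field_simp
    try simp
    linear_combination key (x 0) 0 (x 2) - key (x 0) 0 0
  · -- q₃ quadratic
    refine ⟨c / (b₂ - b₁),
      (fun j => if j = 0 then bb 0 / (b₂ - b₁) else if j = 1 then bb 1 / (b₂ - b₁) else 0),
      Matrix.of (fun i j => if i = 0 ∧ j = 0 then Q 0 0/(b₂ - b₁)
        else if i = 0 ∧ j = 1 then (Q 0 1 + Q 1 0)/(b₂ - b₁)
        else if i = 1 ∧ j = 1 then Q 1 1/(b₂ - b₁) else 0), fun x => ?_⟩
    dsimp only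
    rw [hf₃ x]
    simp [Fin.sum_univ_three]
    field_simp
    try simp
    linear_combination key (x 0) (x 1) 0
end

section
/- Let a, c, e, f be real numbers and for t ∈ ℝ let A(t) = [[a,0,e],[0,a,f],[e,f,c+t]]. Let Γ(t) denote the discriminant of the characteristic polynomial of A(t). Then the coefficient of t² in Γ(t) equals (e² + f²)². Consequently, if Γ(t) = 0 for all t, then e = f = 0. -/
open Polynomial

theorem cubicDiscrim_monic_cubic (p q r : ℝ) :
    cubicDiscrim (X ^ 3 + C p * X ^ 2 + C q * X + C r) =
      18 * p * q * r - 4 * p ^ 3 * r + p ^ 2 * q ^ 2 - 4 * q ^ 3 - 27 * r ^ 2 := by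
  simp only [cubicDiscrim, coeff_add, coeff_C_mul, coeff_X_pow, coeff_X, coeff_C]
  norm_num

theorem charpoly_arrow {R : Type*} [CommRing R] (a d e f : R) :
    (!![a, 0, e; 0, a, f; e, f, d] : Matrix (Fin 3) (Fin 3) R).charpoly =
      X ^ 3 + C (-(2 * a + d)) * X ^ 2 + C (a ^ 2 + 2 * a * d - (e ^ 2 + f ^ 2)) * X
        + C (-(a ^ 2 * d - a * (e ^ 2 + f ^ 2))) := by
  rw [Matrix.charpoly, Matrix.det_fin_three]
  simp [map_ofNat]
  ring

theorem cubicDiscrim_charpoly_arrow (a d e f : ℝ) :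
    cubicDiscrim (!![a, 0, e; 0, a, f; e, f, d] : Matrix (Fin 3) (Fin 3) ℝ).charpoly =
      (e ^ 2 + f ^ 2) ^ 2 * ((d - a) ^ 2 + 4 * (e ^ 2 + f ^ 2)) := by
  rw [charpoly_arrow, cubicDiscrim_monic_cubic]
  ring

theorem discriminant_t2_coefficient
    (a c e f : ℝ)
    (A : ℝ → Matrix (Fin 3) (Fin 3) ℝ)
    (hA : ∀ t, A t = !![a, 0, e; 0, a, f; e, f, c + t])
    (Γ : ℝ → ℝ) (hΓ : ∀ t, Γ t = cubicDiscrim (A t).charpoly) :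
    (∃ coeffs : Fin 5 → ℝ, coeffs 2 = (e ^ 2 + f ^ 2) ^ 2 ∧
      ∀ t, Γ t = ∑ i : Fin 5, coeffs i * t ^ (i : ℕ)) ∧
    ((∀ t, Γ t = 0) → e = 0 ∧ f = 0) := by
  set s := e ^ 2 + f ^ 2
  have hΓ_eq (t : ℝ) : Γ t = s ^ 2 * ((c + t - a) ^ 2 + 4 * s) := by
    rw [hΓ, hA, cubicDiscrim_charpoly_arrow]
  refine ⟨⟨![s ^ 2 * ((c - a) ^ 2 + 4 * s), 2 * (c - a) * s ^ 2, s ^ 2, 0, 0], rfl, fun t => ?_⟩,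
    fun hzero => ?_⟩
  · rw [hΓ_eq, Fin.sum_univ_five]
    simp only [Matrix.cons_val, Fin.val_zero, Fin.val_one, Fin.val_two]
    ring
  · have hs : 4 * s ^ 3 = 0 := by
      linear_combination hzero (a - c) - hΓ_eq (a - c)
    have hsq : e * e + f * f = 0 := by
      simpa [s, sq] using hs
    exact mul_self_add_mul_self_eq_zero.mp hsq
end

section
/- Let f₁, f₂, f₃ : ℝ³ → ℝ be functions with fⱼ independent of the variable xⱼ, and suppose b₃−b₂, b₁−b₃, b₂−b₁ are all nonzero with (b₃−b₂)f₁ + (b₁−b₃)f₂ + (b₂−b₁)f₃ = 0 identically. Then there exist functions m, n, r of one variable such that (b₃−b₂)f₁(x) = m(x₃) − n(x₂), (b₁−b₃)f₂(x) = r(x₁) − m(x₃), and (b₂−b₁)f₃(x) = n(x₂) − r(x₁) for all x ∈ ℝ³. -/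
/-!
Write `g₁ + g₂ + g₃ = 0` for the scaled functions. Evaluating the relation with the first
coordinate frozen at a base point `a₀` splits `g₁(b, c)` as `-g₂(a₀, c) - g₃(a₀, b)`; freezing
the second coordinate at `b₀` as well shows that `g₂(a, c) - g₂(a₀, c)` depends on `a` alone.
-/

theorem exists_sub_decomposition_of_add_add_eq_zero {α β γ G : Type*} [Nonempty α] [Nonempty β]
    [AddCommGroup G] (g₁ : β → γ → G) (g₂ : α → γ → G) (g₃ : α → β → G)
    (h : ∀ a b c, g₁ b c + g₂ a c + g₃ a b = 0) :
    ∃ (m : γ → G) (n : β → G) (r : α → G), ∀ a b c,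
      g₁ b c = m c - n b ∧ g₂ a c = r a - m c ∧ g₃ a b = n b - r a := by
  obtain ⟨a₀⟩ := ‹Nonempty α›
  obtain ⟨b₀⟩ := ‹Nonempty β›
  refine ⟨fun c => -g₂ a₀ c, fun b => g₃ a₀ b, fun a => g₃ a₀ b₀ - g₃ a b₀, fun a b c => ?_⟩
  have h₁ := h a₀ b c
  refine ⟨?_, ?_, ?_⟩
  · linear_combination (norm := module) h₁
  · linear_combination (norm := module) h a b₀ c - h a₀ b₀ c
  · linear_combination (norm := module) h a b c - h₁ - h a b₀ c + h a₀ b₀ c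

theorem cyclic_relation_exact_decomposition_general
    (b₁ b₂ b₃ : ℝ)
    (f₁ f₂ f₃ : (Fin 3 → ℝ) → ℝ)
    (hi₁ : ∀ x y : Fin 3 → ℝ, (∀ i, i ≠ 0 → x i = y i) → f₁ x = f₁ y)
    (hi₂ : ∀ x y : Fin 3 → ℝ, (∀ i, i ≠ 1 → x i = y i) → f₂ x = f₂ y)
    (hi₃ : ∀ x y : Fin 3 → ℝ, (∀ i, i ≠ 2 → x i = y i) → f₃ x = f₃ y)
    (hrel : ∀ x, (b₃ - b₂) * f₁ x + (b₁ - b₃) * f₂ x + (b₂ - b₁) * f₃ x = 0) :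
    ∃ m n r : ℝ → ℝ, ∀ x : Fin 3 → ℝ,
      (b₃ - b₂) * f₁ x = m (x 2) - n (x 1) ∧
      (b₁ - b₃) * f₂ x = r (x 0) - m (x 2) ∧
      (b₂ - b₁) * f₃ x = n (x 1) - r (x 0) := by
  have e₁ (x : Fin 3 → ℝ) : f₁ x = f₁ ![0, x 1, x 2] :=
    hi₁ _ _ fun i hi => by fin_cases i <;> simp_all
  have e₂ (x : Fin 3 → ℝ) : f₂ x = f₂ ![x 0, 0, x 2] :=
    hi₂ _ _ fun i hi => by fin_cases i <;> simp_all
  have e₃ (x : Fin 3 → ℝ) : f₃ x = f₃ ![x 0, x 1, 0] :=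
    hi₃ _ _ fun i hi => by fin_cases i <;> simp_all
  obtain ⟨m, n, r, hmnr⟩ := exists_sub_decomposition_of_add_add_eq_zero
    (fun b c => (b₃ - b₂) * f₁ ![0, b, c]) (fun a c => (b₁ - b₃) * f₂ ![a, 0, c])
    (fun a b => (b₂ - b₁) * f₃ ![a, b, 0])
    fun a b c => by simpa [e₁, e₂, e₃] using hrel ![a, b, c]
  refine ⟨m, n, r, fun x => ?_⟩
  rw [e₁ x, e₂ x, e₃ x]
  exact hmnr (x 0) (x 1) (x 2)

theorem cyclic_relation_exact_decomposition
    (b₁ b₂ b₃ : ℝ) (h32 : b₃ - b₂ ≠ 0) (h13 : b₁ - b₃ ≠ 0) (h21 : b₂ - b₁ ≠ 0)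
    (f₁ f₂ f₃ : (Fin 3 → ℝ) → ℝ)
    (hi₁ : ∀ x y : Fin 3 → ℝ, (∀ i, i ≠ 0 → x i = y i) → f₁ x = f₁ y)
    (hi₂ : ∀ x y : Fin 3 → ℝ, (∀ i, i ≠ 1 → x i = y i) → f₂ x = f₂ y)
    (hi₃ : ∀ x y : Fin 3 → ℝ, (∀ i, i ≠ 2 → x i = y i) → f₃ x = f₃ y)
    (hrel : ∀ x, (b₃ - b₂) * f₁ x + (b₁ - b₃) * f₂ x + (b₂ - b₁) * f₃ x = 0) :
    ∃ m n r : ℝ → ℝ, ∀ x : Fin 3 → ℝ,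
      (b₃ - b₂) * f₁ x = m (x 2) - n (x 1) ∧
      (b₁ - b₃) * f₂ x = r (x 0) - m (x 2) ∧
      (b₂ - b₁) * f₃ x = n (x 1) - r (x 0) :=
  cyclic_relation_exact_decomposition_general b₁ b₂ b₃ f₁ f₂ f₃ hi₁ hi₂ hi₃ hrel
end
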